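/- Let α be an algebraic integer of degree n over ℚ with minimal polynomial p_α ∈ ℤ[X]. Then R_α = Int(M_n^{p_α}(ℤ)); that is, a polynomial f ∈ ℚ[X] satisfies f(α) ∈ ℤ[α] if and only if f(M) ∈ M_n(ℤ) for every n×n integer matrix M with characteristic polynomial p_α. -/

import Mathlib

/-!
If `f(α) = g(α)` with `g ∈ ℤ[X]`, then `p_α ∣ f - g` in `ℚ[X]`, and every integer matrix with
characteristic polynomial `p_α` is killed by `p_α` (Cayley–Hamilton), so `f(M) = g(M)` is
integral. Conversely, take for `M` the matrix of multiplication by `α` on `ℤ[α]` in the basis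
`1, α, …, α^(n-1)`: the first column of `f(M)` lists the coordinates of `f(α)` in that basis,
so if `f(M)` is integral then `f(α) ∈ ℤ[α]`.
-/

open Polynomial

theorem Matrix.aeval_map_algebraMap_map {ι R A : Type*} [Fintype ι] [DecidableEq ι]
    [CommRing R] [CommRing A] [Algebra R A] (M : Matrix ι ι R) (g : R[X]) :
    aeval (M.map (algebraMap R A)) (g.map (algebraMap R A)) =
      (aeval M g).map (algebraMap R A) := by
  rw [aeval_map_algebraMap]
  exact aeval_algHom_apply (Algebra.ofId R A).mapMatrix M g

theorem Polynomial.aeval_eq_aeval_of_aeval_minpoly_eq_zero {K A B : Type*} [Field K] [Ring A]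
    [Algebra K A] [Ring B] [Algebra K B] {x : A} {y : B} (hy : aeval y (minpoly K x) = 0)
    {f g : K[X]} (h : aeval x f = aeval x g) : aeval y f = aeval y g := by
  rw [← sub_eq_zero, ← map_sub] at h ⊢
  exact aeval_eq_zero_of_dvd_aeval_eq_zero (minpoly.dvd K x h) hy

theorem aeval_matrix_map_eq_map_of_aeval_mem_adjoin {ι R K L : Type*} [Fintype ι]
    [DecidableEq ι] [CommRing R] [IsDomain R] [IsIntegrallyClosed R] [Field K] [Algebra R K]
    [IsFractionRing R K] [CommRing L] [IsDomain L] [Algebra R L] [Algebra K L]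
    [IsScalarTower R K L] {α : L} (hα : IsIntegral R α) {f : K[X]}
    (hf : aeval α f ∈ Algebra.adjoin R {α}) (M : Matrix ι ι R) (hM : M.charpoly = minpoly R α) :
    ∃ N : Matrix ι ι R, aeval (M.map (algebraMap R K)) f = N.map (algebraMap R K) := by
  rw [Algebra.adjoin_singleton_eq_range_aeval] at hf
  obtain ⟨g, hg⟩ := hf
  refine ⟨aeval M g, ?_⟩
  rw [← Matrix.aeval_map_algebraMap_map]
  refine aeval_eq_aeval_of_aeval_minpoly_eq_zero (x := α) ?_ ?_
  · rw [minpoly.isIntegrallyClosed_eq_field_fractions' K hα, Matrix.aeval_map_algebraMap_map, ← hM,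
      Matrix.aeval_self_charpoly, Matrix.map_zero _ (map_zero _)]
  · rw [aeval_map_algebraMap]
    exact hg.symm

namespace Algebra

variable {ι R S F L : Type*} [Fintype ι] [DecidableEq ι] [CommRing R] [CommRing S] [Algebra R S]
  [CommRing F] [Algebra R F] [CommRing L] [Algebra R L] [Algebra F L] [IsScalarTower R F L]

theorem sum_aeval_leftMulMatrix_map_apply_smul (b : Module.Basis ι R S) (φ : S →ₐ[R] L) (s : S)
    (f : F[X]) (j : ι) :
    ∑ i, aeval ((leftMulMatrix b s).map (algebraMap R F)) f i j • φ (b i) =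
      aeval (φ s) f * φ (b j) := by
  induction f using Polynomial.induction_on' with
  | add p q hp hq =>
    simp only [map_add, Matrix.add_apply, add_smul, Finset.sum_add_distrib, hp, hq, add_mul]
  | monomial k c =>
    have hcol : ∑ i, b.repr (s ^ k * b j) i • φ (b i) = φ s ^ k * φ (b j) := by
      rw [← map_pow, ← map_mul]
      conv_rhs => rw [← b.sum_repr (s ^ k * b j)]
      simp only [map_sum, map_smul]
    simp only [aeval_monomial, ← Algebra.smul_def, Matrix.smul_apply, ← Matrix.map_pow,
      Matrix.map_apply, ← map_pow, leftMulMatrix_eq_repr_mul, smul_assoc, algebraMap_smul,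
      ← Finset.smul_sum, hcol, smul_mul_assoc]

theorem aeval_mem_range_of_aeval_leftMulMatrix_map_mem (b : Module.Basis ι R S) {j : ι}
    (hj : b j = 1) (φ : S →ₐ[R] L) (s : S) {f : F[X]}
    (h : ∀ i, aeval ((leftMulMatrix b s).map (algebraMap R F)) f i j ∈ (algebraMap R F).range) :
    aeval (φ s) f ∈ φ.range := by
  choose c hc using h
  rw [← mul_one (aeval (φ s) f), ← map_one φ, ← hj, ← sum_aeval_leftMulMatrix_map_apply_smul]
  refine ⟨∑ i, c i • b i, ?_⟩
  simp only [map_sum, AlgHom.toRingHom_eq_coe, RingHom.coe_coe, map_smul, ← hc, algebraMap_smul]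

end Algebra

theorem PowerBasis.charpoly_leftMulMatrix_gen {ι R S : Type*} [Fintype ι] [DecidableEq ι]
    [CommRing R] [CommRing S] [Algebra R S] (pb : PowerBasis R S) (b : Module.Basis ι R S) :
    (Algebra.leftMulMatrix b pb.gen).charpoly = minpoly R pb.gen := by
  have := pb.finite
  have := Module.Free.of_basis pb.basis
  rw [Algebra.leftMulMatrix_apply, LinearMap.charpoly_toMatrix,
    ← LinearMap.charpoly_toMatrix _ pb.basis, ← Algebra.leftMulMatrix_apply,
    charpoly_leftMulMatrix]

/-- Let `α` be an algebraic integer of degree `n` over `ℚ` with (monic)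
minimal polynomial `p_α ∈ ℤ[X]`.  Then `R_α = Int(M_n^{p_α}(ℤ))`: a polynomial `f ∈ ℚ[X]`
satisfies `f(α) ∈ ℤ[α]` if and only if `f(M) ∈ M_n(ℤ)` for every `n × n` integer matrix `M`
with characteristic polynomial `p_α` (values computed in `M_n(ℚ)`). -/
theorem stmt_16 (α : AlgebraicClosure ℚ) (hα : IsIntegral ℤ α) (n : ℕ)
    (hdeg : (minpoly ℚ α).natDegree = n) (f : Polynomial ℚ) :
    Polynomial.aeval α f ∈ Algebra.adjoin ℤ {α} ↔
      ∀ M : Matrix (Fin n) (Fin n) ℤ, M.charpoly = minpoly ℤ α → ∀ i j : Fin n,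
        (Polynomial.aeval (M.map (algebraMap ℤ ℚ)) f) i j ∈ (algebraMap ℤ ℚ).range := by
  refine ⟨fun hf M hM i j => ?_, fun h => ?_⟩
  · obtain ⟨N, hN⟩ := aeval_matrix_map_eq_map_of_aeval_mem_adjoin hα hf M hM
    exact ⟨N i j, by rw [hN, Matrix.map_apply]⟩
  let pb := Algebra.adjoin.powerBasis' hα
  have hdim : pb.dim = n := by
    rw [Algebra.adjoin.powerBasis'_dim, ← hdeg,
      minpoly.isIntegrallyClosed_eq_field_fractions' ℚ hα, (minpoly.monic hα).natDegree_map]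
  let b := pb.basis.reindex (finCongr hdim)
  have hb : b (finCongr hdim ⟨0, pb.dim_pos⟩) = 1 := by simp [b]
  have hcharpoly : (Algebra.leftMulMatrix b pb.gen).charpoly = minpoly ℤ α := by
    rw [pb.charpoly_leftMulMatrix_gen, Algebra.adjoin.powerBasis'_minpoly_gen hα]
  have hgen : (pb.gen : AlgebraicClosure ℚ) = α := by rw [Algebra.adjoin.powerBasis'_gen]
  simpa [hgen] using
    Algebra.aeval_mem_range_of_aeval_leftMulMatrix_map_mem b hb (Algebra.adjoin ℤ {α}).val pb.gen
      (h _ hcharpoly · _)
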